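/- arXiv:1301.5918 — 2 statements merged into one kernel-verified Lean document; each statement's English description precedes it below -/
import Mathlib

section
/- Let C be an n×n real matrix of the form C v = u ⊙ v + (1/2) w ⊙ (T v) + (1/2) T*(w ⊙ v), where ⊙ is coordinatewise product, T is the subdiagonal shift, and |u_k|, |w_k| ≤ √(ε η̃_k + c) with η̃_k = k/m. Then ‖C v‖ ≤ 2 ‖(√(ε η̃ + c)) ⊙ v‖ for all v ∈ ℝⁿ, where (√(ε η̃ + c)) ⊙ v denotes the vector with entries √(ε k/m + c)·v_k. -/
/-!
Split `C = D_u + ½ (D_w T + T* D_w)` with diagonal multiplications `D_u`, `D_w` and the shift `T`.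
The shift and its adjoint are contractions, and each diagonal factor is dominated entrywise by
the weight `s_k = √(ε (k+1)/m + c)`; the only subtle term is `D_w T`, where `|w_k| ≤ s_k ≤ s_{k+1}`
lets the weight travel with the shifted coordinate. Hence `‖C v‖ ≤ (1 + ½ + ½) ‖s ⊙ v‖`.
-/

namespace EuclideanSpace

variable {n : ℕ}

theorem norm_le_norm_of_abs_le {ι : Type*} [Fintype ι] {x y : EuclideanSpace ℝ ι}
    (h : ∀ k, |x k| ≤ |y k|) : ‖x‖ ≤ ‖y‖ := by
  simp only [EuclideanSpace.norm_eq]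
  gcongr with k
  simpa only [Real.norm_eq_abs] using h k

def shiftDown (v : EuclideanSpace ℝ (Fin n)) : EuclideanSpace ℝ (Fin n) :=
  WithLp.toLp 2 fun k => if h : (k : ℕ) + 1 < n then v ⟨(k : ℕ) + 1, h⟩ else 0

def shiftUp (v : EuclideanSpace ℝ (Fin n)) : EuclideanSpace ℝ (Fin n) :=
  WithLp.toLp 2 fun k => if 0 < (k : ℕ) then
    v ⟨(k : ℕ) - 1, lt_of_le_of_lt (Nat.sub_le _ _) k.isLt⟩ else 0

theorem shiftDown_castSucc (v : EuclideanSpace ℝ (Fin (n + 1))) (k : Fin n) :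
    shiftDown v k.castSucc = v k.succ := by
  simp [shiftDown, Fin.succ]

theorem shiftDown_last (v : EuclideanSpace ℝ (Fin (n + 1))) : shiftDown v (Fin.last n) = 0 := by
  simp [shiftDown]

theorem shiftUp_succ (v : EuclideanSpace ℝ (Fin (n + 1))) (k : Fin n) :
    shiftUp v k.succ = v k.castSucc := by
  simp only [shiftUp, Fin.val_pos_iff, Fin.succ_pos, ↓reduceIte, Fin.val_succ,
    add_tsub_cancel_right]
  rfl

theorem shiftUp_zero (v : EuclideanSpace ℝ (Fin (n + 1))) : shiftUp v 0 = 0 := by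
  simp [shiftUp]

theorem norm_shiftDown_le (v : EuclideanSpace ℝ (Fin n)) : ‖shiftDown v‖ ≤ ‖v‖ := by
  cases n with
  | zero => simp [EuclideanSpace.norm_eq]
  | succ n =>
    simp only [EuclideanSpace.norm_eq, Fin.sum_univ_castSucc (fun k => ‖shiftDown v k‖ ^ 2),
      Fin.sum_univ_succ (fun k => ‖v k‖ ^ 2), shiftDown_castSucc, shiftDown_last, norm_zero]
    apply Real.sqrt_le_sqrt
    linarith [sq_nonneg ‖v 0‖, zero_pow (M₀ := ℝ) two_ne_zero]

theorem norm_shiftUp_le (v : EuclideanSpace ℝ (Fin n)) : ‖shiftUp v‖ ≤ ‖v‖ := by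
  cases n with
  | zero => simp [EuclideanSpace.norm_eq]
  | succ n =>
    simp only [EuclideanSpace.norm_eq, Fin.sum_univ_succ (fun k => ‖shiftUp v k‖ ^ 2),
      Fin.sum_univ_castSucc (fun k => ‖v k‖ ^ 2), shiftUp_succ, shiftUp_zero, norm_zero]
    apply Real.sqrt_le_sqrt
    linarith [sq_nonneg ‖v (Fin.last n)‖, zero_pow (M₀ := ℝ) two_ne_zero]

def diagMul {ι : Type*} (s : ι → ℝ) (v : EuclideanSpace ℝ ι) : EuclideanSpace ℝ ι :=
  WithLp.toLp 2 fun k => s k * v k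

theorem norm_diagMul_le_of_abs_le {ι : Type*} [Fintype ι] {a b : ι → ℝ}
    (h : ∀ k, |a k| ≤ |b k|) (v : EuclideanSpace ℝ ι) : ‖diagMul a v‖ ≤ ‖diagMul b v‖ :=
  norm_le_norm_of_abs_le fun k => by
    simp only [diagMul, abs_mul]
    exact mul_le_mul_of_nonneg_right (h k) (abs_nonneg _)

theorem norm_diagMul_shiftDown_le {s w : Fin n → ℝ} (hs : Monotone s) (hw : ∀ k, |w k| ≤ s k)
    (v : EuclideanSpace ℝ (Fin n)) : ‖diagMul w (shiftDown v)‖ ≤ ‖diagMul s v‖ := by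
  refine (norm_le_norm_of_abs_le fun k => ?_).trans (norm_shiftDown_le (diagMul s v))
  simp only [diagMul, shiftDown]
  split_ifs with h
  · have hk : k ≤ ⟨(k : ℕ) + 1, h⟩ := Fin.mk_le_mk.mpr k.val.le_succ
    rw [abs_mul, abs_mul]
    exact mul_le_mul_of_nonneg_right (((hw k).trans (hs hk)).trans (le_abs_self _)) (abs_nonneg _)
  · simp

theorem norm_tridiag_le {s u w : Fin n → ℝ} (hs : Monotone s) (hu : ∀ k, |u k| ≤ s k)
    (hw : ∀ k, |w k| ≤ s k) (v : EuclideanSpace ℝ (Fin n)) :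
    ‖diagMul u v + (1 / 2 : ℝ) • diagMul w (shiftDown v) + (1 / 2 : ℝ) • shiftUp (diagMul w v)‖
      ≤ 2 * ‖diagMul s v‖ := by
  have hs_abs : ∀ {a : Fin n → ℝ}, (∀ k, |a k| ≤ s k) → ∀ k, |a k| ≤ |s k| :=
    fun ha k => (ha k).trans (le_abs_self _)
  have hdiag := norm_diagMul_le_of_abs_le (hs_abs hu) v
  have hdown := norm_diagMul_shiftDown_le hs hw v
  have hup := (norm_shiftUp_le (diagMul w v)).trans (norm_diagMul_le_of_abs_le (hs_abs hw) v)
  calc _ ≤ ‖diagMul u v‖ + (1 / 2) * ‖diagMul w (shiftDown v)‖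
          + (1 / 2) * ‖shiftUp (diagMul w v)‖ := by
        refine (norm_add₃_le).trans_eq ?_
        rw [norm_smul, norm_smul, Real.norm_of_nonneg (by norm_num)]
    _ ≤ 2 * ‖diagMul s v‖ := by linarith

end EuclideanSpace

open EuclideanSpace in
theorem noise_operator_norm_bound_general {n : ℕ} (m ε c : ℝ)
    (hm : 0 < m) (hε : 0 < ε)
    (u w v Cv sv : EuclideanSpace ℝ (Fin n))
    (hu : ∀ k : Fin n, |u k| ≤ Real.sqrt (ε * (((k : ℕ) + 1 : ℕ) : ℝ) / m + c))
    (hw : ∀ k : Fin n, |w k| ≤ Real.sqrt (ε * (((k : ℕ) + 1 : ℕ) : ℝ) / m + c))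
    (hCv : ∀ k : Fin n,
      Cv k = u k * v k
        + (1 / 2) * w k * (if h : (k : ℕ) + 1 < n then v ⟨(k : ℕ) + 1, h⟩ else 0)
        + (1 / 2) * (if 0 < (k : ℕ) then
            w ⟨(k : ℕ) - 1, lt_of_le_of_lt (Nat.sub_le _ _) k.isLt⟩
              * v ⟨(k : ℕ) - 1, lt_of_le_of_lt (Nat.sub_le _ _) k.isLt⟩
          else 0))
    (hsv : ∀ k : Fin n,
      sv k = Real.sqrt (ε * (((k : ℕ) + 1 : ℕ) : ℝ) / m + c) * v k) :
    ‖Cv‖ ≤ 2 * ‖sv‖ := by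
  set s : Fin n → ℝ := fun k => Real.sqrt (ε * (((k : ℕ) + 1 : ℕ) : ℝ) / m + c)
  have hs : Monotone s := fun a b hab => by
    simp only [s]
    gcongr
    exact hab
  have hCv' : Cv = diagMul u v + (1 / 2 : ℝ) • diagMul w (shiftDown v)
      + (1 / 2 : ℝ) • shiftUp (diagMul w v) := by
    ext k
    simp [hCv k, diagMul, shiftDown, shiftUp, mul_assoc]
  have hsv' : sv = diagMul s v := by
    ext k
    exact hsv k
  rw [hCv', hsv']
  exact norm_tridiag_le hs hu hw v

/-- If `C v = u ⊙ v + ½ w ⊙ (T v) + ½ T*(w ⊙ v)` with `T` the subdiagonal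
shift and `|u_k|, |w_k| ≤ √(ε η̃_k + c)` where `η̃_k = k/m`, then
`‖C v‖ ≤ 2 ‖(√(ε η̃ + c)) ⊙ v‖` in the Euclidean norm. -/
theorem noise_operator_norm_bound {n : ℕ} (m ε c : ℝ)
    (hm : 0 < m) (hε : 0 < ε) (hc : 0 < c)
    (u w v Cv sv : EuclideanSpace ℝ (Fin n))
    (hu : ∀ k : Fin n, |u k| ≤ Real.sqrt (ε * (((k : ℕ) + 1 : ℕ) : ℝ) / m + c))
    (hw : ∀ k : Fin n, |w k| ≤ Real.sqrt (ε * (((k : ℕ) + 1 : ℕ) : ℝ) / m + c))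
    (hCv : ∀ k : Fin n,
      Cv k = u k * v k
        + (1 / 2) * w k * (if h : (k : ℕ) + 1 < n then v ⟨(k : ℕ) + 1, h⟩ else 0)
        + (1 / 2) * (if 0 < (k : ℕ) then
            w ⟨(k : ℕ) - 1, lt_of_le_of_lt (Nat.sub_le _ _) k.isLt⟩
              * v ⟨(k : ℕ) - 1, lt_of_le_of_lt (Nat.sub_le _ _) k.isLt⟩
          else 0))
    (hsv : ∀ k : Fin n,
      sv k = Real.sqrt (ε * (((k : ℕ) + 1 : ℕ) : ℝ) / m + c) * v k) :
    ‖Cv‖ ≤ 2 * ‖sv‖ :=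
  noise_operator_norm_bound_general m ε c hm hε u w v Cv sv hu hw hCv hsv
end

section
/- If S is an n×n real symmetric matrix with spectrum in [0,1] and P is an n×n real symmetric positive semidefinite matrix satisfying P ≤ 4I (i.e. ⟨Pu,u⟩ ≤ 4‖u‖² for all u), then ⟨PSv, v⟩ ≥ −‖v‖² for all v ∈ ℝⁿ. -/
open Matrix

private lemma isHerm_of_isSymm {n : ℕ} {S : Matrix (Fin n) (Fin n) ℝ} (hS : S.IsSymm) :
    S.IsHermitian := by
  rwa [Matrix.IsHermitian, Matrix.conjTranspose_eq_transpose_of_trivial]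

/-- For a real symmetric matrix with spectrum in `[0,1]`, `S - S*S` is PSD and `S` is PSD. -/
private lemma psd_of_spec {n : ℕ} {S : Matrix (Fin n) (Fin n) ℝ} (hS : S.IsSymm)
    (hSspec : spectrum ℝ S ⊆ Set.Icc (0:ℝ) 1) :
    S.PosSemidef ∧ (S - S * S).PosSemidef := by
  have hH : S.IsHermitian := isHerm_of_isSymm hS
  obtain ⟨U, d, hUU, hev, hdiag⟩ : ∃ (U : Matrix (Fin n) (Fin n) ℝ) (d : Fin n → ℝ),
      star U * U = 1 ∧ (∀ i, d i ∈ Set.Icc (0:ℝ) 1) ∧ S = U * Matrix.diagonal d * star U := by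
    refine ⟨(hH.eigenvectorUnitary : Matrix (Fin n) (Fin n) ℝ), hH.eigenvalues,
      Matrix.mem_unitaryGroup_iff'.mp hH.eigenvectorUnitary.2,
      fun i => hSspec (hH.eigenvalues_mem_spectrum_real i), ?_⟩
    simpa using hH.spectral_theorem
  constructor
  · have h1 : (Matrix.diagonal d).PosSemidef :=
      Matrix.PosSemidef.diagonal (fun i => (hev i).1)
    have := h1.mul_mul_conjTranspose_same U
    rwa [← Matrix.star_eq_conjTranspose, ← hdiag] at this
  · have key : S - S * S = U * Matrix.diagonal (fun i => d i - d i * d i) * star U := by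
      rw [hdiag]
      have h2 : (U * Matrix.diagonal d * star U) * (U * Matrix.diagonal d * star U) =
          U * (Matrix.diagonal d * Matrix.diagonal d) * star U := by
        rw [Matrix.mul_assoc, Matrix.mul_assoc, Matrix.mul_assoc]
        rw [← Matrix.mul_assoc (star U) U, hUU, Matrix.one_mul]
        noncomm_ring
      rw [h2, Matrix.diagonal_mul_diagonal]
      rw [← Matrix.sub_mul, ← Matrix.mul_sub, ← Matrix.diagonal_sub]
    rw [key]
    have h1 : (Matrix.diagonal (fun i => d i - d i * d i)).PosSemidef := by
      refine Matrix.PosSemidef.diagonal (fun i => ?_)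
      have h0 := (hev i).1
      have h2 := (hev i).2
      show (0:ℝ) ≤ _
      nlinarith
    have := h1.mul_mul_conjTranspose_same U
    rwa [← Matrix.star_eq_conjTranspose] at this

/-- If `P` is real symmetric positive semidefinite with `⟨Pu, u⟩ ≤ 4‖u‖²` for
all `u`, and `S` is real symmetric with all eigenvalues in `[0,1]`, then the
numerical range of `T = P S` satisfies `⟨T v, v⟩ ≥ −‖v‖²` for all `v`. -/
theorem numerical_range_lower_bound {n : ℕ}
    (P S : Matrix (Fin n) (Fin n) ℝ)
    (hP : P.IsSymm) (hS : S.IsSymm)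
    (hPpsd : ∀ u : Fin n → ℝ, 0 ≤ u ⬝ᵥ P.mulVec u)
    (hP4 : ∀ u : Fin n → ℝ, u ⬝ᵥ P.mulVec u ≤ 4 * (u ⬝ᵥ u))
    (hSspec : spectrum ℝ S ⊆ Set.Icc (0:ℝ) 1) :
    ∀ v : Fin n → ℝ, -(v ⬝ᵥ v) ≤ v ⬝ᵥ (P * S).mulVec v := by
  intro v
  obtain ⟨hSpsd, hSS⟩ := psd_of_spec hS hSspec
  set a : Fin n → ℝ := S.mulVec v with ha
  set b : Fin n → ℝ := v - a with hb
  -- symmetry of P in the bilinear form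
  have symmP : ∀ x y : Fin n → ℝ, x ⬝ᵥ P.mulVec y = y ⬝ᵥ P.mulVec x := by
    intro x y
    rw [Matrix.dotProduct_mulVec, ← hP.eq, Matrix.vecMul_transpose, dotProduct_comm, hP.eq]
  -- target equals v ⬝ P a
  have hgoal : v ⬝ᵥ (P * S).mulVec v = v ⬝ᵥ P.mulVec a := by
    rw [← Matrix.mulVec_mulVec]
  rw [hgoal]
  -- key quadratic inequality: 0 ≤ (a + b/2) P (a + b/2)
  have hq := hPpsd (a + (1/2 : ℝ) • b)
  have hexp : (a + (1/2 : ℝ) • b) ⬝ᵥ P.mulVec (a + (1/2 : ℝ) • b) =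
      a ⬝ᵥ P.mulVec a + b ⬝ᵥ P.mulVec a + (1/4 : ℝ) * (b ⬝ᵥ P.mulVec b) := by
    rw [Matrix.mulVec_add, Matrix.mulVec_smul]
    simp only [add_dotProduct, smul_dotProduct, dotProduct_add,
      dotProduct_smul, smul_eq_mul]
    rw [symmP a b]
    ring
  rw [hexp] at hq
  -- bound on b P b
  have hb4 : b ⬝ᵥ P.mulVec b ≤ 4 * (b ⬝ᵥ b) := hP4 b
  -- v = a + b, so v P a = a P a + b P a
  have hv : v ⬝ᵥ P.mulVec a = a ⬝ᵥ P.mulVec a + b ⬝ᵥ P.mulVec a := by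
    have : v = a + b := by rw [hb]; ring
    rw [this, add_dotProduct]
  -- b ⬝ b ≤ v ⬝ v
  have hbb : b ⬝ᵥ b ≤ v ⬝ᵥ v := by
    have h1 : 0 ≤ v ⬝ᵥ S.mulVec v := by simpa using hSpsd.dotProduct_mulVec_nonneg v
    have h2 : 0 ≤ v ⬝ᵥ (S - S * S).mulVec v := by simpa using hSS.dotProduct_mulVec_nonneg v
    have h2' : v ⬝ᵥ (S - S * S).mulVec v = v ⬝ᵥ a - a ⬝ᵥ a := by
      rw [Matrix.sub_mulVec, dotProduct_sub, ← Matrix.mulVec_mulVec]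
      congr 1
      rw [ha, Matrix.dotProduct_mulVec, ← hS.eq, Matrix.vecMul_transpose, hS.eq]
    have hba : b ⬝ᵥ b = v ⬝ᵥ v - 2 * (v ⬝ᵥ a) + a ⬝ᵥ a := by
      rw [hb]
      simp only [sub_dotProduct, dotProduct_sub]
      rw [dotProduct_comm a v]
      ring
    rw [h2'] at h2
    have hva : 0 ≤ v ⬝ᵥ a := by rwa [ha]
    linarith
  linarith
end
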